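/- Suppose a pH system ż = F∇H + Gu with F = J - R (J skew-symmetric, R symmetric PSD) satisfies the matching conditions Gᵀ∇H_a = 0 and Fᵀ∇H_a ∈ image(G) at a point z, where H_a = H_d - H. Then with the control u = β + v, β = -G†Fᵀ∇H_a (G† a left inverse of G) and v arbitrary, the closed-loop vector field equals F∇H_d + Gv at z. -/
import Mathlib

open Matrix

/-- Under the EB-PBC matching conditions, the closed-loop vector field
`F∇H + G(β + v)` equals `F∇H_d + Gv`, where `β = -G† Fᵀ ∇H_a`. -/
theorem stmt_9 {n m : ℕ} (J R : Matrix (Fin (2*n)) (Fin (2*n)) ℝ)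
    (hJ : Jᵀ = -J) (hR : R.PosSemidef)
    (G : Matrix (Fin (2*n)) (Fin m) ℝ) (Gdag : Matrix (Fin m) (Fin (2*n)) ℝ)
    (hGdag : Gdag * G = 1)
    (gH gHd : Fin (2*n) → ℝ)  -- ∇H(z) and ∇H_d(z) at the point z
    (v : Fin m → ℝ)
    -- matching conditions for ∇H_a = ∇H_d - ∇H:
    (hmatch1 : Gᵀ *ᵥ (gHd - gH) = 0)
    (hmatch2 : (J - R)ᵀ *ᵥ (gHd - gH) =
      -(G *ᵥ (-(Gdag *ᵥ ((J - R)ᵀ *ᵥ (gHd - gH)))))) :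
    (J - R) *ᵥ gH + G *ᵥ (-(Gdag *ᵥ ((J - R)ᵀ *ᵥ (gHd - gH))) + v) =
      (J - R) *ᵥ gHd + G *ᵥ v := by
  set a : Fin (2*n) → ℝ := gHd - gH with ha
  have hRsym : Rᵀ = R := by
    have := hR.isHermitian.eq
    simpa using this
  -- step 1: aᵀ F a = 0
  have h1 : a ⬝ᵥ ((J - R)ᵀ *ᵥ a) = 0 := by
    rw [hmatch2]
    have hG : a ⬝ᵥ (G *ᵥ (Gdag *ᵥ ((J - R)ᵀ *ᵥ a))) = 0 := by
      rw [dotProduct_mulVec, ← mulVec_transpose, hmatch1, zero_dotProduct]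
    rw [mulVec_neg, neg_neg]
    exact hG
  have hskew : a ⬝ᵥ (Jᵀ *ᵥ a) = 0 := by
    have h2 : a ⬝ᵥ (Jᵀ *ᵥ a) = a ⬝ᵥ (J *ᵥ a) := by
      rw [dotProduct_mulVec, ← mulVec_transpose, transpose_transpose, dotProduct_comm]
    have h3 : a ⬝ᵥ (Jᵀ *ᵥ a) = -(a ⬝ᵥ (J *ᵥ a)) := by
      rw [hJ, neg_mulVec, dotProduct_neg]
    linarith [h2, h3]
  have hRa : R *ᵥ a = 0 := by
    have hq : a ⬝ᵥ (R *ᵥ a) = 0 := by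
      rw [transpose_sub, sub_mulVec, dotProduct_sub, hskew, hRsym] at h1
      linarith
    exact (hR.dotProduct_mulVec_zero_iff a).mp (by simpa using hq)
  -- Fᵀ a = -F a
  have hFt : (J - R)ᵀ *ᵥ a = -((J - R) *ᵥ a) := by
    rw [transpose_sub, hJ, hRsym, sub_mulVec, neg_mulVec, hRa, sub_mulVec, hRa]
    abel
  -- step 2: Gβ = F a
  have hGb : G *ᵥ (-(Gdag *ᵥ ((J - R)ᵀ *ᵥ a))) = (J - R) *ᵥ a := by
    have h := congrArg Neg.neg hmatch2
    rw [neg_neg] at h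
    rw [← h, hFt, neg_neg]
  rw [mulVec_add, hGb, ha, mulVec_sub]
  abel
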